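/- arXiv:1611.02267 — 3 statements merged into one kernel-verified Lean document; each statement's English description precedes it below -/
import Mathlib

section
/- In the category of pointed types (or pointed sets), coproducts are not van Kampen: there exists a coproduct diagram such that the induced functor from the slice over the coproduct to the product of the slices over the summands is not an equivalence. -/
/-!
The one-point pointed type `0` is initial, so `0 ⨿ 0 = 0` with both injections the identity.
Pulling this coproduct back along the unique map `Bool → 0` gives the cofan on `Bool` with both
injections the identity: its two squares are trivially pullbacks, so if the coproduct were
van Kampen this cofan would be a coproduct too. But a cofan `X ← X → X` of identities is a
coproduct only when any two maps out of `X` agree, and `𝟙 Bool` differs from the constant map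
at the base point.
-/

open CategoryTheory CategoryTheory.Limits

namespace CategoryTheory.Limits

variable {C : Type*} [Category C]

theorem BinaryCofan.nonempty_isColimit_mk_id_id_iff {X : C} :
    Nonempty (IsColimit (BinaryCofan.mk (𝟙 X) (𝟙 X))) ↔ ∀ ⦃W : C⦄ (f g : X ⟶ W), f = g := by
  constructor
  · rintro ⟨hc⟩ W f g
    exact (hc.fac (BinaryCofan.mk f g) ⟨WalkingPair.left⟩).symm.trans
      (hc.fac (BinaryCofan.mk f g) ⟨WalkingPair.right⟩)
  · intro h
    exact ⟨BinaryCofan.isColimitMk (fun s => s.inl) (fun _ => Category.id_comp _)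
      (fun s => h _ _) (fun _ _ hl _ => by simpa using hl)⟩

theorem IsVanKampenColimit.nonempty_isColimit_mk_id_id {X Z : C}
    (H : IsVanKampenColimit (BinaryCofan.mk (𝟙 X) (𝟙 X))) (t : Z ⟶ X) :
    Nonempty (IsColimit (BinaryCofan.mk (𝟙 Z) (𝟙 Z))) := by
  refine (H (BinaryCofan.mk (𝟙 Z) (𝟙 Z)) (mapPair t t) t ?_
    (NatTrans.Equifibered.of_discrete _)).mpr ?_
  · ext ⟨⟨⟩⟩ <;> exact (Category.comp_id t).trans (Category.id_comp t).symm
  · rintro ⟨⟨⟩⟩ <;> exact IsPullback.id_horiz t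

end CategoryTheory.Limits

theorem Pointed.Hom.ext_of_subsingleton {X W : Pointed} [Subsingleton X] (f g : X ⟶ W) :
    f = g :=
  Pointed.Hom.ext <| funext fun x => by
    rw [Subsingleton.elim x X.point, f.map_point, g.map_point]

/-- In the category of pointed types, coproducts are not van Kampen: there is a
binary coproduct cocone which is a colimit but not a van Kampen colimit. -/
theorem pointed_coproducts_not_vanKampen :
    ∃ (X Y : Pointed.{0}) (c : BinaryCofan X Y),
      Nonempty (IsColimit c) ∧ ¬ IsVanKampenColimit c := by
  let zero : Pointed.{0} := Pointed.of PUnit.unit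
  let bool : Pointed.{0} := Pointed.of false
  refine ⟨zero, zero, BinaryCofan.mk (𝟙 zero) (𝟙 zero),
    BinaryCofan.nonempty_isColimit_mk_id_id_iff.mpr fun _ => Pointed.Hom.ext_of_subsingleton,
    fun H => ?_⟩
  have hbool := IsVanKampenColimit.nonempty_isColimit_mk_id_id H
    (⟨fun _ => PUnit.unit, rfl⟩ : bool ⟶ zero)
  have hconst : (𝟙 bool : bool ⟶ bool) = ⟨fun _ => false, rfl⟩ :=
    BinaryCofan.nonempty_isColimit_mk_id_id_iff.mp hbool _ _
  exact Bool.noConfusion (congrArg (fun f : bool ⟶ bool => f.toFun true) hconst)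
end

section
/- In any category C with pullbacks, an initial object 0 of C is van Kampen (as the colimit of the empty diagram) if and only if 0 is strictly initial, i.e., every map X → 0 is an isomorphism. -/
open CategoryTheory CategoryTheory.Limits

universe v u

/-- Pulling the empty cocone on `I` back along `f` gives the empty cocone on `X`; the pullback
condition is vacuous, so van Kampen makes it a colimit. -/
theorem CategoryTheory.IsVanKampenColimit.nonempty_isInitial_of_hom {C : Type u} [Category.{v} C]
    {I : C} (h : IsVanKampenColimit (asEmptyCocone I)) {X : C} (f : X ⟶ I) :
    Nonempty (IsInitial X) :=
  (h (asEmptyCocone X) (𝟙 _) f (by ext ⟨⟨⟩⟩) (.of_isIso _)).mpr (by rintro ⟨⟨⟩⟩)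

theorem CategoryTheory.Limits.IsInitial.hasStrictInitialObjects {C : Type u} [Category.{v} C]
    {I : C} (hI : IsInitial I) (h : ∀ (X : C) (f : X ⟶ I), IsIso f) :
    HasStrictInitialObjects C where
  out {_ _} f hJ :=
    have := h _ (f ≫ (hJ.uniqueUpToIso hI).hom)
    IsIso.of_isIso_comp_right f (hJ.uniqueUpToIso hI).hom

theorem initial_isVanKampen_iff_strict_general {C : Type u} [Category.{v} C]
    {I : C} (hI : IsInitial I) :
    IsVanKampenColimit (asEmptyCocone I) ↔ ∀ (X : C) (f : X ⟶ I), IsIso f := by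
  refine ⟨fun h X f => ?_, fun h => ?_⟩
  · obtain ⟨hX⟩ := IsVanKampenColimit.nonempty_isInitial_of_hom h f
    exact isIso_of_isInitial hX hI f
  · have := hI.hasStrictInitialObjects h
    exact IsInitial.isVanKampenColimit hI

/-- In a category with pullbacks, an initial object, viewed as the colimit of the
empty diagram, is a van Kampen colimit if and only if it is strictly initial,
i.e. every map into it is an isomorphism. -/
theorem initial_isVanKampen_iff_strict {C : Type u} [Category.{v} C]
    [HasPullbacks C] {I : C} (hI : IsInitial I) :
    IsVanKampenColimit (asEmptyCocone I) ↔ ∀ (X : C) (f : X ⟶ I), IsIso f :=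
  initial_isVanKampen_iff_strict_general hI
end

section
/- For a category C with pullbacks, and a pullback square in C with vertices V', V, U', U (V' = U' ×_U V, with g : V' → V, q : V' → U', p : V → U, f : U' → U), the Beck–Chevalley transformation q_! ∘ g* → f* ∘ p_! between functors C/V → C/U' is a natural isomorphism. -/
open CategoryTheory CategoryTheory.Limits

universe v u

variable {C : Type u} [Category.{v} C] [HasPullbacks C]

/-- The Beck–Chevalley natural transformation `q_! ∘ g* ⟶ f* ∘ p_!` associated to a
commutative square `g ≫ p = q ≫ f`, obtained as the mate of the canonical
isomorphism `map q ⋙ map f ≅ map g ⋙ map p`. -/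
noncomputable def beckChevalley {V' V U' U : C}
    (g : V' ⟶ V) (q : V' ⟶ U') (p : V ⟶ U) (f : U' ⟶ U) (w : g ≫ p = q ≫ f) :
    Over.pullback g ⋙ Over.map q ⟶ Over.map p ⋙ Over.pullback f :=
  mateEquiv (Over.mapPullbackAdj g) (Over.mapPullbackAdj f)
    ((Over.mapComp q f).inv ≫ eqToHom (by rw [← w, Over.mapComp_eq]))

/-- For a pullback square in a category with pullbacks, the Beck–Chevalley
transformation `q_! ∘ g* ⟶ f* ∘ p_!` is a natural isomorphism. -/
theorem beckChevalley_isIso_of_isPullback {V' V U' U : C}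
    (g : V' ⟶ V) (q : V' ⟶ U') (p : V ⟶ U) (f : U' ⟶ U)
    (sq : IsPullback g q p f) :
    IsIso (beckChevalley g q p f sq.w) := by
  have key : ∀ X : Over V, IsIso ((beckChevalley g q p f sq.w).app X) := by
    intro X
    have h1 : ((beckChevalley g q p f sq.w).app X).left ≫ pullback.fst (X.hom ≫ p) f
        = pullback.fst X.hom g := by
      simp [beckChevalley, mateEquiv, Over.mapPullbackAdj, Over.mapComp, Adjunction.mkOfHomEquiv]
      erw [pullback.lift_fst, pullback.lift_fst_assoc, pullback.lift_fst_assoc, pullback.lift_fst_assoc]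
      simp
    have h2 : ((beckChevalley g q p f sq.w).app X).left ≫ pullback.snd (X.hom ≫ p) f
        = pullback.snd X.hom g ≫ q := by
      simp [beckChevalley, mateEquiv, Over.mapPullbackAdj, Over.mapComp, Adjunction.mkOfHomEquiv]
      erw [pullback.lift_snd, pullback.lift_snd, pullback.lift_snd, pullback.lift_snd]
    have hpb : IsPullback (pullback.fst X.hom g) (pullback.snd X.hom g ≫ q) (X.hom ≫ p) f :=
      (IsPullback.of_hasPullback X.hom g).paste_vert sq
    have hm : ((beckChevalley g q p f sq.w).app X).left = hpb.isoPullback.hom := by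
      apply pullback.hom_ext <;> simp [h1, h2]
    have : IsIso ((beckChevalley g q p f sq.w).app X).left := by
      rw [hm]; infer_instance
    have : IsIso ((Over.forget U').map ((beckChevalley g q p f sq.w).app X)) := this
    exact isIso_of_reflects_iso _ (Over.forget U')
  exact NatIso.isIso_of_isIso_app _
end
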